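/- arXiv:2305.16162 — 8 statements merged into one kernel-verified Lean document; each statement's English description precedes it below -/
import Mathlib

section
/- If (A,B) is a critical point of φ(A,B) = g(AᵀB) + (λ/2)(‖A‖_F² + ‖B‖_F²), where g is differentiable and λ > 0, then AAᵀ = BBᵀ. -/
open Matrix

attribute [local instance] Matrix.normedAddCommGroup Matrix.normedSpace

/-- Frobenius inner product of two real matrices. -/
noncomputable def frobInner {m n : Type*} [Fintype m] [Fintype n]
    (A B : Matrix m n ℝ) : ℝ :=
  ∑ i, ∑ j, A i j * B i j

theorem Matrix.smul_mul_transpose_eq_of_critical {R d m n : Type*} [CommRing R]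
    [Fintype m] [Fintype n] {lam : R} {A : Matrix d m R} {B : Matrix d n R}
    {M : Matrix m n R} (hA : lam • A = -(B * Mᵀ)) (hB : lam • B = -(A * M)) :
    lam • (A * Aᵀ) = lam • (B * Bᵀ) := by
  have hAM : A * M = -(lam • B) := by rw [hB, neg_neg]
  calc lam • (A * Aᵀ) = lam • A * Aᵀ := (Matrix.smul_mul _ _ _).symm
    _ = -(B * (A * M)ᵀ) := by rw [hA, transpose_mul, Matrix.neg_mul, Matrix.mul_assoc]
    _ = lam • (B * Bᵀ) := by
      rw [hAM, transpose_neg, transpose_smul, Matrix.mul_neg, Matrix.mul_smul, neg_neg]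

theorem critical_point_gram_eq_general {d m n : ℕ}
    (G : Matrix (Fin m) (Fin n) ℝ → Matrix (Fin m) (Fin n) ℝ)
    (lam : ℝ) (hlam : 0 < lam)
    (A : Matrix (Fin d) (Fin m) ℝ) (B : Matrix (Fin d) (Fin n) ℝ)
    (hA : lam • A = -(B * (G (Aᵀ * B))ᵀ))
    (hB : lam • B = -(A * G (Aᵀ * B))) :
    A * Aᵀ = B * Bᵀ :=
  smul_right_injective _ hlam.ne' (smul_mul_transpose_eq_of_critical hA hB)

theorem critical_point_gram_eq {d m n : ℕ}
    (g : Matrix (Fin m) (Fin n) ℝ → ℝ)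
    (G : Matrix (Fin m) (Fin n) ℝ → Matrix (Fin m) (Fin n) ℝ)
    (hg : Differentiable ℝ g)
    (hG : ∀ D H, fderiv ℝ g D H = frobInner (G D) H)
    (lam : ℝ) (hlam : 0 < lam)
    (A : Matrix (Fin d) (Fin m) ℝ) (B : Matrix (Fin d) (Fin n) ℝ)
    (hA : lam • A = -(B * (G (Aᵀ * B))ᵀ))
    (hB : lam • B = -(A * G (Aᵀ * B))) :
    A * Aᵀ = B * Bᵀ :=
  critical_point_gram_eq_general G lam hlam A B hA hB
end

section
/- Let g : ℝ^{m×n} → ℝ be convex and differentiable and λ > 0. If (A,B) is a critical point of φ(A,B) = g(AᵀB) + (λ/2)(‖A‖_F² + ‖B‖_F²) satisfying ‖∇g(AᵀB)‖_op ≤ λ, then D = AᵀB is a global minimizer of ψ(D) = g(D) + λ‖D‖_*. -/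
open Matrix

attribute [local instance] Matrix.normedAddCommGroup Matrix.normedSpace

/-- Nuclear norm of a real matrix: the sum of its singular values. -/
noncomputable def nuclearNorm {m n : Type*} [Fintype m] [Fintype n] [DecidableEq n]
    (C : Matrix m n ℝ) : ℝ :=
  ∑ i, Real.sqrt ((show (Cᵀ * C).IsHermitian by
    simpa using Matrix.isHermitian_conjTranspose_mul_self C).eigenvalues i)

/-- Operator (spectral) norm of a real matrix, i.e. the norm of the induced
linear map between Euclidean spaces. -/
noncomputable def opNorm {m n : Type*} [Fintype m] [Fintype n] [DecidableEq n]
    (C : Matrix m n ℝ) : ℝ :=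
  ‖LinearMap.toContinuousLinearMap (Matrix.toEuclideanLin C)‖

/-!
Write `D₀ = AᵀB` and `Z = ∇g(D₀)`. Convexity gives `g D ≥ g D₀ + ⟪Z, D - D₀⟫`. The two
criticality equations give `⟪Z, D₀⟫ = -(λ/2)(‖A‖_F² + ‖B‖_F²) ≤ -λ‖D₀‖_*`, because
`‖PᵀQ‖_* ≤ (‖P‖_F² + ‖Q‖_F²)/2` for all `P, Q`; and `-⟪Z, D⟫ ≤ ‖Z‖_op ‖D‖_* ≤ λ‖D‖_*` by the
duality of the two norms. Adding the three inequalities gives the claim.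

Both norm inequalities are read off in an orthonormal eigenbasis `v` of `DᵀD`: there
`‖D‖_* = ∑ ‖D v_j‖` and the vectors `D v_j` are pairwise orthogonal, so their normalizations
`u_j` form an orthonormal family with `‖D v_j‖ = ⟪P u_j, Q v_j⟫` when `D = PᵀQ`.
-/

open scoped RealInnerProductSpace

theorem ConvexOn.add_fderiv_sub_le {E : Type*} [NormedAddCommGroup E] [NormedSpace ℝ E]
    {s : Set E} {f : E → ℝ} (hf : ConvexOn ℝ s f) {x y : E} (hx : x ∈ s) (hy : y ∈ s)
    (hfx : DifferentiableAt ℝ f x) :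
    f x + fderiv ℝ f x (y - x) ≤ f y := by
  set L : ℝ →ᵃ[ℝ] E := AffineMap.lineMap x y
  have hL0 : L 0 = x := AffineMap.lineMap_apply_zero x y
  have hL1 : L 1 = y := AffineMap.lineMap_apply_one x y
  have hfL : HasFDerivAt f (fderiv ℝ f x) (L 0) := hL0 ▸ hfx.hasFDerivAt
  have := (hf.comp_affineMap L).le_slope_of_hasDerivAt (by simpa [hL0] using hx)
    (by simpa [hL1] using hy) one_pos (hfL.comp_hasDerivAt 0 AffineMap.hasDerivAt_lineMap)
  rw [slope_def_field, Function.comp_apply, Function.comp_apply, hL0, hL1] at this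
  linarith

lemma orthonormal_inv_norm_smul {E ι : Type*} [NormedAddCommGroup E] [InnerProductSpace ℝ E]
    {w : ι → E} (hw : Pairwise fun i j => ⟪w i, w j⟫ = 0) (hw0 : ∀ i, w i ≠ 0) :
    Orthonormal ℝ fun i => ‖w i‖⁻¹ • w i := by
  refine ⟨fun i => norm_smul_inv_norm (hw0 i), fun i j hij => ?_⟩
  simp [real_inner_smul_left, real_inner_smul_right, hw hij]

section Frobenius

variable {d m n : Type*} [Fintype d] [Fintype m] [Fintype n]

lemma frobInner_eq_trace (X Y : Matrix m n ℝ) : frobInner X Y = trace (Xᵀ * Y) := by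
  simp only [frobInner, trace, diag_apply, mul_apply, transpose_apply]
  exact Finset.sum_comm

lemma frobInner_sub_right (Z X Y : Matrix m n ℝ) :
    frobInner Z (X - Y) = frobInner Z X - frobInner Z Y := by
  simp only [frobInner, Matrix.sub_apply, mul_sub, Finset.sum_sub_distrib]

lemma frobInner_neg_smul_right (c : ℝ) (X Y : Matrix m n ℝ) :
    frobInner X (-(c • Y)) = -(c * frobInner X Y) := by
  simp only [frobInner, Matrix.neg_apply, Matrix.smul_apply, smul_eq_mul, Finset.mul_sum,
    ← Finset.sum_neg_distrib]
  congr! 2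
  ring

lemma frobInner_transpose_mul_eq_left (Z : Matrix m n ℝ) (A : Matrix d m ℝ) (B : Matrix d n ℝ) :
    frobInner Z (Aᵀ * B) = frobInner A (B * Zᵀ) := by
  rw [frobInner_eq_trace, frobInner_eq_trace, trace_mul_comm, Matrix.mul_assoc]

lemma frobInner_transpose_mul_eq_right (Z : Matrix m n ℝ) (A : Matrix d m ℝ) (B : Matrix d n ℝ) :
    frobInner Z (Aᵀ * B) = frobInner B (A * Z) := by
  rw [frobInner_eq_trace, frobInner_eq_trace, ← trace_transpose]
  simp [Matrix.mul_assoc]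

lemma two_mul_frobInner_transpose_mul_of_critical {lam : ℝ} (Z : Matrix m n ℝ)
    (A : Matrix d m ℝ) (B : Matrix d n ℝ) (hA : lam • A = -(B * Zᵀ)) (hB : lam • B = -(A * Z)) :
    2 * frobInner Z (Aᵀ * B) = -(lam * (frobInner A A + frobInner B B)) := by
  rw [two_mul]
  nth_rw 1 [frobInner_transpose_mul_eq_left]
  rw [frobInner_transpose_mul_eq_right, neg_eq_iff_eq_neg.mp hA.symm,
    neg_eq_iff_eq_neg.mp hB.symm, frobInner_neg_smul_right, frobInner_neg_smul_right]
  ring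

end Frobenius

section EuclideanLin

variable {m n p ι : Type*} [Fintype m] [Fintype n] [Fintype p] [Fintype ι]
  [DecidableEq n] [DecidableEq p]

lemma Matrix.inner_toEuclideanLin_toEuclideanLin (X : Matrix m n ℝ) (Y : Matrix m p ℝ)
    (x : EuclideanSpace ℝ n) (y : EuclideanSpace ℝ p) :
    ⟪toEuclideanLin X x, toEuclideanLin Y y⟫ = ⟪x, toEuclideanLin (Xᵀ * Y) y⟫ := by
  simp [EuclideanSpace.inner_eq_star_dotProduct, ← mulVec_mulVec, dotProduct_mulVec,
    vecMul_transpose, dotProduct_comm]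

lemma Matrix.trace_eq_sum_inner_toEuclideanLin (X : Matrix n n ℝ)
    (b : OrthonormalBasis ι ℝ (EuclideanSpace ℝ n)) :
    trace X = ∑ i, ⟪b i, toEuclideanLin X (b i)⟫ := by
  rw [← LinearMap.trace_eq_sum_inner, toEuclideanLin_eq_toLin_orthonormal, trace_toLin_eq]

lemma frobInner_eq_sum_inner_toEuclideanLin (X Y : Matrix m n ℝ)
    (b : OrthonormalBasis ι ℝ (EuclideanSpace ℝ n)) :
    frobInner X Y = ∑ i, ⟪toEuclideanLin X (b i), toEuclideanLin Y (b i)⟫ := by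
  simp only [frobInner_eq_trace, trace_eq_sum_inner_toEuclideanLin _ b,
    inner_toEuclideanLin_toEuclideanLin]

omit [Fintype m] in
lemma Matrix.toEuclideanLin_apply_eq_inner (X : Matrix m n ℝ) (x : EuclideanSpace ℝ n) (i : m) :
    toEuclideanLin X x i = ⟪WithLp.toLp 2 (X i), x⟫ := by
  simp [EuclideanSpace.inner_eq_star_dotProduct, mulVec, dotProduct_comm]

/-- Bessel's inequality, applied to the rows of `X`. -/
lemma sum_norm_toEuclideanLin_sq_le_frobInner (X : Matrix m n ℝ) {u : ι → EuclideanSpace ℝ n}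
    (hu : Orthonormal ℝ u) :
    ∑ j, ‖toEuclideanLin X (u j)‖ ^ 2 ≤ frobInner X X := by
  simp only [EuclideanSpace.norm_sq_eq, toEuclideanLin_apply_eq_inner, Real.norm_eq_abs, sq_abs]
  rw [Finset.sum_comm, frobInner]
  refine Finset.sum_le_sum fun i _ => ?_
  have := hu.sum_inner_products_le (WithLp.toLp 2 (X i)) (s := Finset.univ)
  rw [EuclideanSpace.norm_sq_eq] at this
  simpa [real_inner_comm, sq] using this

lemma norm_toEuclideanLin_le_opNorm (Z : Matrix m n ℝ) (x : EuclideanSpace ℝ n) :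
    ‖toEuclideanLin Z x‖ ≤ opNorm Z * ‖x‖ :=
  (LinearMap.toContinuousLinearMap (toEuclideanLin Z)).le_opNorm x

end EuclideanLin

section SingularVectors

variable {m n : Type*} [Fintype m] [Fintype n]

lemma Matrix.posSemidef_transpose_mul_self (D : Matrix m n ℝ) : (Dᵀ * D).PosSemidef := by
  simpa using posSemidef_conjTranspose_mul_self D

variable [DecidableEq n]

noncomputable def Matrix.rightSingularBasis (D : Matrix m n ℝ) :
    OrthonormalBasis n ℝ (EuclideanSpace ℝ n) :=
  D.posSemidef_transpose_mul_self.isHermitian.eigenvectorBasis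

lemma Matrix.inner_toEuclideanLin_rightSingularBasis (D : Matrix m n ℝ) (j k : n) :
    ⟪toEuclideanLin D (D.rightSingularBasis j), toEuclideanLin D (D.rightSingularBasis k)⟫ =
      D.posSemidef_transpose_mul_self.isHermitian.eigenvalues k *
        ⟪D.rightSingularBasis j, D.rightSingularBasis k⟫ := by
  rw [inner_toEuclideanLin_toEuclideanLin, ← real_inner_smul_right]
  congr 1
  ext i
  exact congrFun (D.posSemidef_transpose_mul_self.isHermitian.mulVec_eigenvectorBasis k) i

lemma Matrix.inner_toEuclideanLin_rightSingularBasis_of_ne (D : Matrix m n ℝ) {j k : n}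
    (hjk : j ≠ k) :
    ⟪toEuclideanLin D (D.rightSingularBasis j), toEuclideanLin D (D.rightSingularBasis k)⟫ = 0 := by
  rw [D.inner_toEuclideanLin_rightSingularBasis, D.rightSingularBasis.orthonormal.2 hjk, mul_zero]

lemma nuclearNorm_eq_sum_norm (D : Matrix m n ℝ) :
    nuclearNorm D = ∑ j, ‖toEuclideanLin D (D.rightSingularBasis j)‖ := by
  refine Finset.sum_congr rfl fun j _ => ?_
  rw [norm_eq_sqrt_real_inner, D.inner_toEuclideanLin_rightSingularBasis,
    real_inner_self_eq_norm_sq, D.rightSingularBasis.orthonormal.1 j, one_pow, mul_one]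

lemma nuclearNorm_nonneg (D : Matrix m n ℝ) : 0 ≤ nuclearNorm D := by
  rw [nuclearNorm_eq_sum_norm]
  positivity

lemma abs_frobInner_le_opNorm_mul_nuclearNorm (Z D : Matrix m n ℝ) :
    |frobInner Z D| ≤ opNorm Z * nuclearNorm D := by
  set v := D.rightSingularBasis
  calc |frobInner Z D| = |∑ j, ⟪toEuclideanLin Z (v j), toEuclideanLin D (v j)⟫| := by
        rw [frobInner_eq_sum_inner_toEuclideanLin _ _ v]
    _ ≤ ∑ j, ‖toEuclideanLin Z (v j)‖ * ‖toEuclideanLin D (v j)‖ :=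
        (Finset.abs_sum_le_sum_abs _ _).trans
          (Finset.sum_le_sum fun j _ => abs_real_inner_le_norm _ _)
    _ ≤ ∑ j, opNorm Z * ‖toEuclideanLin D (v j)‖ := by
        gcongr with j
        simpa [v.orthonormal.1 j] using norm_toEuclideanLin_le_opNorm Z (v j)
    _ = opNorm Z * nuclearNorm D := by rw [nuclearNorm_eq_sum_norm, Finset.mul_sum]

lemma nuclearNorm_transpose_mul_le {d : Type*} [Fintype d] [DecidableEq m]
    (P : Matrix d m ℝ) (Q : Matrix d n ℝ) :
    nuclearNorm (Pᵀ * Q) ≤ (frobInner P P + frobInner Q Q) / 2 := by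
  set D := Pᵀ * Q
  set v := D.rightSingularBasis
  set w : n → EuclideanSpace ℝ m := fun j => toEuclideanLin D (v j)
  let J := {j // w j ≠ 0}
  set u : J → EuclideanSpace ℝ m := fun j => ‖w j‖⁻¹ • w j
  have hu : Orthonormal ℝ u := orthonormal_inv_norm_smul
    (fun j k hjk => D.inner_toEuclideanLin_rightSingularBasis_of_ne (Subtype.coe_ne_coe.mpr hjk))
    (fun j => j.2)
  have hv : Orthonormal ℝ fun j : J => v j := v.orthonormal.comp _ Subtype.val_injective
  have key (j : J) :
      ‖w j‖ ≤ (‖toEuclideanLin P (u j)‖ ^ 2 + ‖toEuclideanLin Q (v j)‖ ^ 2) / 2 := by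
    have hw : ‖w j‖ = ⟪toEuclideanLin P (u j), toEuclideanLin Q (v j)⟫ := by
      rw [inner_toEuclideanLin_toEuclideanLin, real_inner_smul_left, real_inner_self_eq_norm_sq]
      field_simp
    rw [hw]
    nlinarith [real_inner_le_norm (toEuclideanLin P (u j)) (toEuclideanLin Q (v j)),
      sq_nonneg (‖toEuclideanLin P (u j)‖ - ‖toEuclideanLin Q (v j)‖)]
  have hsum : nuclearNorm D = ∑ j : J, ‖w j‖ := by
    rw [nuclearNorm_eq_sum_norm, ← Finset.sum_subtype {j | w j ≠ 0}
      (fun j => by simp) (fun j => ‖w j‖)]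
    exact (Finset.sum_filter_of_ne fun j _ h => norm_ne_zero_iff.mp h).symm
  calc nuclearNorm D = ∑ j : J, ‖w j‖ := hsum
    _ ≤ ∑ j : J, (‖toEuclideanLin P (u j)‖ ^ 2 + ‖toEuclideanLin Q (v j)‖ ^ 2) / 2 :=
        Finset.sum_le_sum fun j _ => key j
    _ = (∑ j, ‖toEuclideanLin P (u j)‖ ^ 2 + ∑ j : J, ‖toEuclideanLin Q (v j)‖ ^ 2) / 2 := by
        rw [← Finset.sum_add_distrib, Finset.sum_div]
    _ ≤ (frobInner P P + frobInner Q Q) / 2 := by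
        gcongr
        · exact sum_norm_toEuclideanLin_sq_le_frobInner P hu
        · exact sum_norm_toEuclideanLin_sq_le_frobInner Q hv

end SingularVectors

theorem critical_point_global_min_nuclear_general {d m n : ℕ}
    (g : Matrix (Fin m) (Fin n) ℝ → ℝ)
    (G : Matrix (Fin m) (Fin n) ℝ → Matrix (Fin m) (Fin n) ℝ)
    (hconv : ConvexOn ℝ Set.univ g)
    (hg : Differentiable ℝ g)
    (hG : ∀ D H, fderiv ℝ g D H = frobInner (G D) H)
    (lam : ℝ)
    (A : Matrix (Fin d) (Fin m) ℝ) (B : Matrix (Fin d) (Fin n) ℝ)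
    (hA : lam • A = -(B * (G (Aᵀ * B))ᵀ))
    (hB : lam • B = -(A * G (Aᵀ * B)))
    (hop : opNorm (G (Aᵀ * B)) ≤ lam) :
    ∀ D : Matrix (Fin m) (Fin n) ℝ,
      g (Aᵀ * B) + lam * nuclearNorm (Aᵀ * B) ≤ g D + lam * nuclearNorm D := by
  intro D
  set Z := G (Aᵀ * B)
  have hlam : 0 ≤ lam := (norm_nonneg _).trans hop
  have htangent : g (Aᵀ * B) + frobInner Z (D - Aᵀ * B) ≤ g D := by
    rw [← hG]
    exact hconv.add_fderiv_sub_le (Set.mem_univ _) (Set.mem_univ D) (hg _)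
  have hcrit := two_mul_frobInner_transpose_mul_of_critical Z A B hA hB
  have hnuc := mul_le_mul_of_nonneg_left (nuclearNorm_transpose_mul_le A B) hlam
  have hdual : -frobInner Z D ≤ lam * nuclearNorm D :=
    calc -frobInner Z D ≤ |frobInner Z D| := neg_le_abs _
      _ ≤ opNorm Z * nuclearNorm D := abs_frobInner_le_opNorm_mul_nuclearNorm Z D
      _ ≤ lam * nuclearNorm D := by gcongr; exact nuclearNorm_nonneg D
  rw [frobInner_sub_right] at htangent
  linarith

theorem critical_point_global_min_nuclear {d m n : ℕ}
    (g : Matrix (Fin m) (Fin n) ℝ → ℝ)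
    (G : Matrix (Fin m) (Fin n) ℝ → Matrix (Fin m) (Fin n) ℝ)
    (hconv : ConvexOn ℝ Set.univ g)
    (hg : Differentiable ℝ g)
    (hG : ∀ D H, fderiv ℝ g D H = frobInner (G D) H)
    (lam : ℝ) (hlam : 0 < lam)
    (A : Matrix (Fin d) (Fin m) ℝ) (B : Matrix (Fin d) (Fin n) ℝ)
    (hA : lam • A = -(B * (G (Aᵀ * B))ᵀ))
    (hB : lam • B = -(A * G (Aᵀ * B)))
    (hop : opNorm (G (Aᵀ * B)) ≤ lam) :
    ∀ D : Matrix (Fin m) (Fin n) ℝ,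
      g (Aᵀ * B) + lam * nuclearNorm (Aᵀ * B) ≤ g D + lam * nuclearNorm D :=
  critical_point_global_min_nuclear_general g G hconv hg hG lam A B hA hB hop
end

section
/- Under the latent symmetry assumption, if Z_k ∈ ℝ^{n_c×L} is the matrix whose ℓ-th column is the standard basis vector e_{z_{k,ℓ}}, and Z = [Z_1 … Z_K] ∈ ℝ^{n_c×KL}, then ∑_{k=1}^K Z_k = (K/n_c) 𝟙_{n_c} 𝟙_L^T and Z Zᵀ = (KL/n_c) I_{n_c}. -/
open Finset Matrix

/-- One-hot concept matrix of the latent variable `z k`: its `ℓ`-th column is the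
standard basis vector `e_{z k ℓ}`. -/
def Zmat {n_c L K : ℕ} (z : Fin K → Fin L → Fin n_c) (k : Fin K) :
    Matrix (Fin n_c) (Fin L) ℝ :=
  Matrix.of fun α ℓ => if z k ℓ = α then 1 else 0

/-- The concatenation `Z = [Z_1 … Z_K]`. -/
def Zbig {n_c L K : ℕ} (z : Fin K → Fin L → Fin n_c) :
    Matrix (Fin n_c) (Fin K × Fin L) ℝ :=
  Matrix.of fun α p => if z p.1 p.2 = α then 1 else 0

/-!
Fix a position `ℓ` and some `z_{k₀}`. Sorting the `j` with `z_{j,ℓ} = β ≠ z_{k₀,ℓ}` by their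
Hamming distance `r ≥ 1` to `z_{k₀}` and summing the latent-symmetry profile over `r` gives,
by the binomial theorem, `(K / n_c^L) · n_c^(L-1) = K / n_c`. The counts over all `β` add up
to `K`, so the value `β = z_{k₀,ℓ}` also occurs `K / n_c` times. Both identities only read off
these column counts: `(∑ Z_k)_{α ℓ}` is one of them, and `Z Zᵀ` is diagonal with entries
`∑_ℓ` of them.
-/

theorem sum_range_choose_mul_sub_one_pow (x : ℝ) (m : ℕ) :
    ∑ r ∈ range (m + 1), (m.choose r : ℝ) * (x - 1) ^ r = x ^ m := by
  simpa [mul_comm] using (add_pow (x - 1) 1 m).symm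

theorem eq_of_sum_eq_card_nsmul_of_forall_ne {A M : Type*} [Fintype A] [DecidableEq A]
    [AddCommGroup M] {f : A → M} {v : M} (a : A) (hsum : ∑ b, f b = Fintype.card A • v)
    (hne : ∀ b ≠ a, f b = v) : f a = v := by
  have hsingle : ∑ b, (f b - v) = f a - v :=
    Fintype.sum_eq_single a fun b hb => sub_eq_zero.2 (hne b hb)
  rw [sum_sub_distrib, hsum, sum_const, card_univ, sub_self] at hsingle
  exact sub_eq_zero.1 hsingle.symm

section HammingProfile

variable {ι A : Type*} [Fintype ι] [DecidableEq A] {L : ℕ}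

theorem card_filter_eq_sum_card_filter_hammingDist (z : ι → Fin L → A) (x : Fin L → A)
    (p : ι → Prop) [DecidablePred p] :
    #{j | p j} = ∑ r ∈ range (L + 1), #{j | hammingDist (z j) x = r ∧ p j} := by
  rw [card_eq_sum_card_fiberwise (f := fun j => hammingDist (z j) x) (t := range (L + 1))]
  · simp only [filter_filter, and_comm]
  · intro j _
    simpa [Nat.lt_succ_iff] using hammingDist_le_card_fintype (x := z j) (y := x)

theorem card_filter_apply_eq_of_hammingDist_profile (z : ι → Fin L → A) {k : ι} {ℓ : Fin L}
    {β : A} (hβ : z k ℓ ≠ β) {c x : ℝ}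
    (hprofile : ∀ r ∈ Icc 1 L, (#{j | hammingDist (z j) (z k) = r ∧ z j ℓ = β} : ℝ) =
      c * (L - 1).choose (r - 1) * (x - 1) ^ (r - 1)) :
    (#{j | z j ℓ = β} : ℝ) = c * x ^ (L - 1) := by
  obtain ⟨m, rfl⟩ := Nat.exists_eq_add_one_of_ne_zero ℓ.pos.ne'
  have hzero : #{j | hammingDist (z j) (z k) = 0 ∧ z j ℓ = β} = 0 := by
    simp only [hammingDist_eq_zero, card_eq_zero, filter_eq_empty_iff]
    rintro j - ⟨hjk, hj⟩
    exact hβ (hjk ▸ hj)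
  rw [card_filter_eq_sum_card_filter_hammingDist z (z k), Nat.cast_sum, sum_range_succ', hzero,
    Nat.cast_zero, add_zero, sum_congr rfl fun r hr => hprofile (r + 1) ?_]
  · simp only [Nat.add_sub_cancel, mul_assoc, ← mul_sum, sum_range_choose_mul_sub_one_pow]
  · simpa [Nat.lt_succ_iff] using hr

end HammingProfile

def IsLatentSymmetric {K L n_c : ℕ} (z : Fin K → Fin L → Fin n_c) : Prop :=
  ∀ (k : Fin K) (ℓ : Fin L) (α : Fin n_c), ∀ r ∈ Icc 1 L,
    (#{j | hammingDist (z j) (z k) = r ∧ z j ℓ = α} : ℝ) =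
      if z k ℓ = α then
        (K / n_c ^ L : ℝ) * Nat.choose (L - 1) r * ((n_c : ℝ) - 1) ^ r
      else
        (K / n_c ^ L : ℝ) * Nat.choose (L - 1) (r - 1) * ((n_c : ℝ) - 1) ^ (r - 1)

theorem IsLatentSymmetric.card_filter_apply_eq {K L n_c : ℕ} {z : Fin K → Fin L → Fin n_c}
    (hz : IsLatentSymmetric z) (ℓ : Fin L) (α : Fin n_c) :
    (#{j | z j ℓ = α} : ℝ) = K / n_c := by
  obtain rfl | hK := K.eq_zero_or_pos
  · simp
  let k₀ : Fin K := ⟨0, hK⟩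
  have hn : (n_c : ℝ) ≠ 0 := Nat.cast_ne_zero.2 α.pos.ne'
  have hne : ∀ β ≠ z k₀ ℓ, (#{j | z j ℓ = β} : ℝ) = K / n_c := fun β hβ => by
    rw [card_filter_apply_eq_of_hammingDist_profile z hβ.symm fun r hr => by
        simpa only [if_neg hβ.symm] using hz k₀ ℓ β r hr,
      div_mul_eq_mul_div, mul_div_assoc, ← Nat.sub_add_cancel ℓ.pos, pow_succ,
      Nat.add_sub_cancel, div_mul_cancel_left₀ (pow_ne_zero _ hn)]
    rfl
  obtain rfl | hα := eq_or_ne α (z k₀ ℓ)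
  · refine eq_of_sum_eq_card_nsmul_of_forall_ne (f := fun β => (#{j | z j ℓ = β} : ℝ)) _ ?_ hne
    rw [← Nat.cast_sum, ← card_eq_sum_card_fiberwise fun _ _ => mem_coe.2 (mem_univ _)]
    simp [mul_div_cancel₀ _ hn]
  · exact hne α hα

theorem sum_Zmat_apply {K L n_c : ℕ} (z : Fin K → Fin L → Fin n_c) (α : Fin n_c) (ℓ : Fin L) :
    (∑ k, Zmat z k) α ℓ = #{k | z k ℓ = α} := by
  simp [Matrix.sum_apply, Zmat]

theorem Zbig_mul_transpose {K L n_c : ℕ} (z : Fin K → Fin L → Fin n_c) :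
    Zbig z * (Zbig z)ᵀ = diagonal fun α => ∑ ℓ, (#{k | z k ℓ = α} : ℝ) := by
  ext α β
  rw [mul_apply, diagonal_apply]
  split_ifs with hαβ
  · subst hαβ
    rw [Fintype.sum_prod_type, sum_comm]
    simp [Zbig, ← ite_and]
  · refine sum_eq_zero fun p _ => ?_
    by_cases h : z p.1 p.2 = α <;> simp [Zbig, h, hαβ]

theorem latent_symmetry_Z_identities_general (n_c L K : ℕ)
    (z : Fin K → Fin L → Fin n_c)
    (hsym : ∀ (k : Fin K) (ℓ : Fin L) (α : Fin n_c), ∀ r ∈ Finset.Icc 1 L,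
      ((Finset.univ.filter fun j : Fin K =>
          hammingDist (z j) (z k) = r ∧ z j ℓ = α).card : ℝ) =
        if z k ℓ = α then
          (K / n_c ^ L : ℝ) * Nat.choose (L - 1) r * ((n_c : ℝ) - 1) ^ r
        else
          (K / n_c ^ L : ℝ) * Nat.choose (L - 1) (r - 1) * ((n_c : ℝ) - 1) ^ (r - 1)) :
    (∑ k, Zmat z k) = ((K : ℝ) / n_c) • Matrix.of (fun _ _ => (1 : ℝ)) ∧
    Zbig z * (Zbig z)ᵀ = (((K : ℝ) * L) / n_c) • (1 : Matrix (Fin n_c) (Fin n_c) ℝ) := by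
  have hcount : ∀ ℓ α, (#{j | z j ℓ = α} : ℝ) = K / n_c :=
    IsLatentSymmetric.card_filter_apply_eq hsym
  refine ⟨?_, ?_⟩
  · ext α ℓ
    simp [sum_Zmat_apply, hcount]
  · rw [Zbig_mul_transpose, smul_one_eq_diagonal]
    congr 1
    ext α
    simp [hcount, mul_div_assoc, mul_comm]

theorem latent_symmetry_Z_identities (n_c L K : ℕ) (hn : 2 ≤ n_c) (hL : 1 ≤ L) (hK : 1 ≤ K)
    (z : Fin K → Fin L → Fin n_c)
    (hsym : ∀ (k : Fin K) (ℓ : Fin L) (α : Fin n_c), ∀ r ∈ Finset.Icc 1 L,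
      ((Finset.univ.filter fun j : Fin K =>
          hammingDist (z j) (z k) = r ∧ z j ℓ = α).card : ℝ) =
        if z k ℓ = α then
          (K / n_c ^ L : ℝ) * Nat.choose (L - 1) r * ((n_c : ℝ) - 1) ^ r
        else
          (K / n_c ^ L : ℝ) * Nat.choose (L - 1) (r - 1) * ((n_c : ℝ) - 1) ^ (r - 1)) :
    (∑ k, Zmat z k) = ((K : ℝ) / n_c) • Matrix.of (fun _ _ => (1 : ℝ)) ∧
    Zbig z * (Zbig z)ᵀ = (((K : ℝ) * L) / n_c) • (1 : Matrix (Fin n_c) (Fin n_c) ℝ) :=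
  latent_symmetry_Z_identities_general n_c L K z hsym
end

section
/- Under the latent symmetry assumption, with S_r(k) = {j : dist(z_j,z_k)=r} and Z_k the one-hot matrix of z_k, for all r ∈ {1,…,L} and k ∈ {1,…,K}: Z_k − (1/|S_r(k)|) ∑_{j∈S_r(k)} Z_j = θ_r Z_k + A_r, where θ_r = (n_c/(n_c−1))·(r/L) and A_r = −(1/(n_c−1))·(r/L)·𝟙_{n_c}𝟙_L^T. -/
open Finset Matrix

theorem latent_symmetry_mean_value (n_c L K : ℕ) (hn : 2 ≤ n_c) (hL : 1 ≤ L) (hK : 1 ≤ K)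
    (z : Fin K → Fin L → Fin n_c)
    (hsym : ∀ (k : Fin K) (ℓ : Fin L) (α : Fin n_c), ∀ r ∈ Finset.Icc 1 L,
      ((Finset.univ.filter fun j : Fin K =>
          hammingDist (z j) (z k) = r ∧ z j ℓ = α).card : ℝ) =
        if z k ℓ = α then
          (K / n_c ^ L : ℝ) * Nat.choose (L - 1) r * ((n_c : ℝ) - 1) ^ r
        else
          (K / n_c ^ L : ℝ) * Nat.choose (L - 1) (r - 1) * ((n_c : ℝ) - 1) ^ (r - 1)) :
    ∀ (k : Fin K), ∀ r ∈ Finset.Icc 1 L,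
      Zmat z k -
          (((Finset.univ.filter fun j : Fin K =>
              hammingDist (z j) (z k) = r).card : ℝ))⁻¹ •
            (∑ j ∈ Finset.univ.filter fun j : Fin K => hammingDist (z j) (z k) = r,
              Zmat z j) =
        (((n_c : ℝ) / ((n_c : ℝ) - 1)) * (r / L)) • Zmat z k +
          (-(1 / ((n_c : ℝ) - 1)) * (r / L)) • Matrix.of (fun _ _ => (1 : ℝ)) := by
  intro k r hr
  obtain ⟨hr1, hrL⟩ := Finset.mem_Icc.mp hr
  have hL1 : L - 1 + 1 = L := by omega
  have hr1' : r - 1 + 1 = r := by omega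
  -- nat choose identities
  have hnat1 : L * Nat.choose (L-1) (r-1) = Nat.choose L r * r := by
    have h := Nat.add_one_mul_choose_eq (L-1) (r-1)
    simp only [Nat.succ_eq_add_one, hL1, hr1'] at h
    exact h
  have hnat2 : Nat.choose (L-1) (r-1) + Nat.choose (L-1) r = Nat.choose L r := by
    have h := Nat.choose_succ_succ (L-1) (r-1)
    simp only [Nat.succ_eq_add_one, hr1', hL1] at h
    omega
  set e : ℝ := (n_c : ℝ) - 1 with he_def
  set Q : ℝ := (K / n_c ^ L : ℝ) with hQ_def
  set c1 : ℝ := (Nat.choose (L-1) r : ℝ) with hc1_def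
  set c2 : ℝ := (Nat.choose (L-1) (r-1) : ℝ) with hc2_def
  set cL : ℝ := (Nat.choose L r : ℝ) with hcL_def
  have hid1 : (L : ℝ) * c2 = cL * r := by
    rw [hc2_def, hcL_def]; exact_mod_cast congrArg (Nat.cast (R := ℝ)) hnat1
  have hid2 : c2 + c1 = cL := by
    rw [hc1_def, hc2_def, hcL_def]; exact_mod_cast congrArg (Nat.cast (R := ℝ)) hnat2
  have hn2 : (2:ℝ) ≤ (n_c:ℝ) := by exact_mod_cast hn
  have he : (0:ℝ) < e := by rw [he_def]; linarith
  have hLpos : (0:ℝ) < (L:ℝ) := by exact_mod_cast hL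
  have hQpos : (0:ℝ) < Q := by
    have hKpos : (0:ℝ) < (K:ℝ) := by exact_mod_cast hK
    have : (0:ℝ) < (n_c:ℝ) ^ L := by positivity
    rw [hQ_def]; positivity
  have hcLpos : (0:ℝ) < cL := by
    rw [hcL_def]; exact_mod_cast Nat.choose_pos hrL
  have hpow : e ^ r = e ^ (r-1) * e := by
    conv_lhs => rw [← hr1']
    rw [pow_succ]
  set S := Finset.univ.filter fun j : Fin K => hammingDist (z j) (z k) = r with hS_def
  -- sum of one-hot entries over S
  have hsum : ∀ (α : Fin n_c) (ℓ : Fin L), (∑ j ∈ S, Zmat z j α ℓ) =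
      ((Finset.univ.filter fun j : Fin K =>
          hammingDist (z j) (z k) = r ∧ z j ℓ = α).card : ℝ) := by
    intro α ℓ
    rw [hS_def]
    simp only [Zmat, Matrix.of_apply]
    rw [Finset.sum_boole, Finset.filter_filter]
  -- cardinality of S
  have ℓ0 : Fin L := ⟨0, hL⟩
  have hcardS : (S.card : ℝ) = Q * e ^ r * cL := by
    have hfib : S.card = ∑ α : Fin n_c, (Finset.univ.filter fun j : Fin K =>
        hammingDist (z j) (z k) = r ∧ z j ℓ0 = α).card := by
      rw [Finset.card_eq_sum_card_fiberwise (f := fun j => z j ℓ0) (t := Finset.univ)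
        (fun x _ => Finset.mem_univ _)]
      congr 1
      ext α
      rw [hS_def, Finset.filter_filter]
    have : (S.card : ℝ) = ∑ α : Fin n_c, ((Finset.univ.filter fun j : Fin K =>
        hammingDist (z j) (z k) = r ∧ z j ℓ0 = α).card : ℝ) := by
      rw [hfib]; push_cast; ring
    rw [this]
    have hsplit : ∀ α : Fin n_c,
        ((Finset.univ.filter fun j : Fin K =>
          hammingDist (z j) (z k) = r ∧ z j ℓ0 = α).card : ℝ) =
        Q * c2 * e ^ (r-1) + (if z k ℓ0 = α then (Q * c1 * e ^ r - Q * c2 * e ^ (r-1)) else 0) := by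
      intro α
      rw [hsym k ℓ0 α r hr]
      split <;> ring
    rw [Finset.sum_congr rfl (fun α _ => hsplit α), Finset.sum_add_distrib,
      Finset.sum_const, Finset.sum_ite_eq, if_pos (Finset.mem_univ _), Finset.card_univ,
      Fintype.card_fin]
    have hcast : ((n_c:ℝ)) = e + 1 := by rw [he_def]; ring
    rw [nsmul_eq_mul, hcast, hpow]
    linear_combination (Q * e ^ (r-1) * e) * hid2
  have hNpos : (0:ℝ) < (S.card : ℝ) := by rw [hcardS]; positivity
  have hNne : ((S.card : ℝ)) ≠ 0 := ne_of_gt hNpos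
  -- now prove entrywise
  ext α ℓ
  simp only [Matrix.sub_apply, Matrix.smul_apply, Matrix.sum_apply, Matrix.add_apply,
    Matrix.of_apply, smul_eq_mul]
  rw [show (∑ j ∈ S, Zmat z j α ℓ) = _ from hsum α ℓ, hsym k ℓ α r hr]
  have hZ : Zmat z k α ℓ = if z k ℓ = α then (1:ℝ) else 0 := rfl
  rw [hZ]
  have heL : e ≠ 0 := ne_of_gt he
  have hLne : (L:ℝ) ≠ 0 := ne_of_gt hLpos
  have hcLne : cL ≠ 0 := ne_of_gt hcLpos
  have hQne : Q ≠ 0 := ne_of_gt hQpos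
  have hene : e ^ r ≠ 0 := pow_ne_zero _ heL
  have hene' : e ^ (r-1) ≠ 0 := pow_ne_zero _ heL
  have hc2' : c2 = cL * r / L := by field_simp; linarith [hid1]
  have hc1' : c1 = cL - cL * r / L := by
    have h2 := hid2
    rw [hc2'] at h2
    linarith
  have hcast : ((n_c:ℝ)) = e + 1 := by rw [he_def]; ring
  have hc1'' : ((Nat.choose (L-1) r : ℕ) : ℝ) = cL - cL * r / L := by
    rw [← hc1_def]; exact hc1'
  have hc2'' : ((Nat.choose (L-1) (r-1) : ℕ) : ℝ) = cL * r / L := by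
    rw [← hc2_def]; exact hc2'
  by_cases h : z k ℓ = α
  · rw [if_pos h, if_pos h, hcardS, hcast, hc1'']
    field_simp
    ring
  · rw [if_neg h, if_neg h, hcardS, hpow, hc2'']
    field_simp
    ring
end

section
/- For n_c ≥ 2, K ≥ 1, L ≥ 1, λ > 0, and η > 0, the function H(t) = log(1 − K/n_c^L + (K/n_c^L)(1 + (n_c−1)e^{−ηt})^L) + λt, defined for t ≥ 0, is strictly convex and has a unique minimizer on [0,∞), provided K ≤ n_c^L. -/
/-!
With `b = K / n_c ^ L ∈ (0, 1]` and `c = n_c - 1 > 0`, `H t = ψ (φ t) + λ t` where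
`φ t = L log (1 + c e^{-ηt})` and `ψ s = log (1 - b + b e^s)`. A function `log (a + b e^s)` with
`a ≥ 0` has derivative `1 - a / (a + b e^s)`, monotone in `s`; hence `ψ` is convex and strictly
increasing, while `φ`, whose derivative `L η (1 / (1 + c e^{-ηt}) - 1)` is strictly increasing,
is strictly convex. So `H` is strictly convex. The argument of the logarithm is at least `1`, so
`H t ≥ λ t → ∞`, and a continuous function on `[0, ∞)` tending to infinity attains its minimum,
which strict convexity makes unique.
-/

open Real Set Filter

lemma ConvexOn.comp_strictConvexOn_univ {E : Type*} [NormedAddCommGroup E] [NormedSpace ℝ E]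
    [FiniteDimensional ℝ E] {f : E → ℝ} {g : ℝ → ℝ} (hg : ConvexOn ℝ univ g) (hg' : StrictMono g)
    (hf : StrictConvexOn ℝ univ f) : StrictConvexOn ℝ univ (g ∘ f) := by
  have hf_cont : Continuous f := continuousOn_univ.1 (hf.convexOn.continuousOn isOpen_univ)
  have hrange : Convex ℝ (f '' univ) := by
    rw [image_univ]
    exact (isPreconnected_range hf_cont).convex
  exact (hg.subset (subset_univ _) hrange).comp_strictConvexOn hf (hg'.strictMonoOn _)

lemma exists_isMinOn_Ici_of_tendsto_atTop {f : ℝ → ℝ} {a : ℝ} (hf : ContinuousOn f (Ici a))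
    (htop : Tendsto f atTop atTop) : ∃ x ∈ Ici a, IsMinOn f (Ici a) x := by
  refine hf.exists_isMinOn' isClosed_Ici self_mem_Ici ?_
  rw [cocompact_eq_atBot_atTop, inf_sup_right, eventually_sup]
  refine ⟨eventually_inf_principal.2 ?_, (htop.eventually_ge_atTop (f a)).filter_mono inf_le_left⟩
  exact (eventually_lt_atBot a).mono fun x hxa hx => absurd hx (not_le.2 hxa)

lemma StrictConvexOn.existsUnique_isMinOn_Ici {f : ℝ → ℝ} {a : ℝ}
    (hf : StrictConvexOn ℝ (Ici a) f) (hf_cont : ContinuousOn f (Ici a))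
    (htop : Tendsto f atTop atTop) : ∃! x, x ∈ Ici a ∧ IsMinOn f (Ici a) x := by
  obtain ⟨x, hx, hmin⟩ := exists_isMinOn_Ici_of_tendsto_atTop hf_cont htop
  exact ⟨x, ⟨hx, hmin⟩, fun y ⟨hy, hymin⟩ => hf.eq_of_isMinOn hymin hmin hy hx⟩

section LogAddMulExp

variable {a b : ℝ}

lemma hasDerivAt_log_add_mul_exp (ha : 0 ≤ a) (hb : 0 < b) (s : ℝ) :
    HasDerivAt (fun s => log (a + b * exp s)) (1 - a / (a + b * exp s)) s := by
  have hpos : 0 < a + b * exp s := by positivity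
  convert (((hasDerivAt_exp s).const_mul b).const_add a).log hpos.ne' using 1
  field_simp
  ring

lemma convexOn_log_add_mul_exp (ha : 0 ≤ a) (hb : 0 < b) :
    ConvexOn ℝ univ (fun s => log (a + b * exp s)) := by
  refine Monotone.convexOn_univ_of_deriv
    (fun s => (hasDerivAt_log_add_mul_exp ha hb s).differentiableAt) ?_
  rw [funext fun s => (hasDerivAt_log_add_mul_exp ha hb s).deriv]
  intro s t hst
  dsimp only
  gcongr

lemma strictMono_log_add_mul_exp (ha : 0 ≤ a) (hb : 0 < b) :
    StrictMono (fun s => log (a + b * exp s)) := fun s t hst =>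
  log_lt_log (by positivity) (by gcongr)

end LogAddMulExp

lemma strictConvexOn_mul_log_one_add_mul_exp_neg_mul {κ c η : ℝ} (hκ : 0 < κ) (hc : 0 < c)
    (hη : 0 < η) :
    StrictConvexOn ℝ univ (fun t => κ * log (1 + c * exp (-η * t))) := by
  have hderiv : ∀ t, HasDerivAt (fun t => κ * log (1 + c * exp (-η * t)))
      (κ * η * (1 / (1 + c * exp (-η * t)) - 1)) t := by
    intro t
    have hpos : 0 < 1 + c * exp (-η * t) := by positivity
    have hlin : HasDerivAt (fun t => -η * t) (-η) t := by
      simpa using (hasDerivAt_id t).const_mul (-η)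
    refine ((((hlin.exp).const_mul c).const_add 1).log hpos.ne').const_mul κ |>.congr_deriv ?_
    field_simp
    ring
  refine StrictMono.strictConvexOn_univ_of_deriv
    (continuous_iff_continuousAt.2 fun t => (hderiv t).differentiableAt.continuousAt) ?_
  rw [funext fun t => (hderiv t).deriv]
  intro s t hst
  simp only [neg_mul]
  gcongr

theorem H_strictConvex_unique_min (n_c K L : ℕ) (hn : 2 ≤ n_c) (hK : 1 ≤ K) (hL : 1 ≤ L)
    (hKn : K ≤ n_c ^ L) (lam η : ℝ) (hlam : 0 < lam) (hη : 0 < η)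
    (H : ℝ → ℝ)
    (hH : ∀ t, H t =
      Real.log (1 - (K : ℝ) / n_c ^ L +
        ((K : ℝ) / n_c ^ L) * (1 + ((n_c : ℝ) - 1) * Real.exp (-η * t)) ^ L) + lam * t) :
    StrictConvexOn ℝ (Set.Ici 0) H ∧
    ∃! t : ℝ, t ∈ Set.Ici (0 : ℝ) ∧ ∀ s ∈ Set.Ici (0 : ℝ), H t ≤ H s := by
  set b : ℝ := K / n_c ^ L
  set c : ℝ := n_c - 1
  have hb : 0 < b := div_pos (by exact_mod_cast hK) (by positivity)
  have hb1 : b ≤ 1 := div_le_one_of_le₀ (by exact_mod_cast hKn) (by positivity)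
  have hc : 0 < c := sub_pos.2 (by exact_mod_cast hn)
  have hH_eq : H = fun t => log (1 - b + b * exp (L * log (1 + c * exp (-η * t)))) + lam * t := by
    funext t
    rw [hH, exp_nat_mul, exp_log (by positivity)]
  have hconv : StrictConvexOn ℝ univ H := by
    rw [hH_eq]
    exact ((convexOn_log_add_mul_exp (sub_nonneg.2 hb1) hb).comp_strictConvexOn_univ
      (strictMono_log_add_mul_exp (sub_nonneg.2 hb1) hb)
      (strictConvexOn_mul_log_one_add_mul_exp_neg_mul (by exact_mod_cast hL) hc hη)).add_convexOn
      ((convexOn_id convex_univ).smul hlam.le)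
  have hlower : ∀ t, lam * t ≤ H t := by
    intro t
    have hpow : 1 ≤ (1 + c * exp (-η * t)) ^ L :=
      one_le_pow₀ (le_add_of_nonneg_right (by positivity))
    have harg : 1 ≤ 1 - b + b * (1 + c * exp (-η * t)) ^ L := by nlinarith
    rw [hH]
    linarith [log_nonneg harg]
  have htop : Tendsto H atTop atTop :=
    tendsto_atTop_mono hlower (tendsto_id.const_mul_atTop hlam)
  have hconv₀ := hconv.subset (subset_univ _) (convex_Ici 0)
  refine ⟨hconv₀, ?_⟩
  simpa only [isMinOn_iff] using hconv₀.existsUnique_isMinOn_Ici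
    ((hconv.convexOn.continuousOn isOpen_univ).mono (subset_univ _)) htop
end

section
/- Let g(c,x) = x(1 + γ e^{(1+γ)c²x})/(1+γ) with γ = 1/(n_c−1), n_c ≥ 2. For each fixed c ∈ ℝ, the map x ↦ g(c,x) is strictly increasing on [0,∞) with g(c,0)=0 and g(c,x)→∞ as x→∞; hence for each μ > 0 the equation g(c,x)=μ has a unique solution φ(c) ∈ (0,∞). Moreover, the map c ↦ φ(c) on [0,∞) is continuous, strictly decreasing, and tends to 0 as c → ∞. -/
open Real Set Filter

theorem implicit_solution_properties (n_c : ℕ) (hn : 2 ≤ n_c)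
    (γ : ℝ) (hγ : γ = 1 / ((n_c : ℝ) - 1))
    (g : ℝ → ℝ → ℝ)
    (hg : ∀ c x, g c x = x * (1 + γ * Real.exp ((1 + γ) * c ^ 2 * x)) / (1 + γ))
    (μ : ℝ) (hμ : 0 < μ) :
    (∀ c : ℝ, StrictMonoOn (g c) (Set.Ici 0)) ∧
    (∀ c : ℝ, g c 0 = 0) ∧
    (∀ c : ℝ, Tendsto (g c) atTop atTop) ∧
    (∀ c : ℝ, ∃! x : ℝ, 0 < x ∧ g c x = μ) ∧
    (∀ φ : ℝ → ℝ, (∀ c, 0 ≤ c → 0 < φ c ∧ g c (φ c) = μ) →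
      ContinuousOn φ (Set.Ici 0) ∧ StrictAntiOn φ (Set.Ici 0) ∧
        Tendsto φ atTop (nhds 0)) := by
  have hn1 : (1:ℝ) ≤ (n_c : ℝ) - 1 := by
    have : (2:ℝ) ≤ (n_c : ℝ) := by exact_mod_cast hn
    linarith
  have hγ0 : 0 < γ := by rw [hγ]; exact div_pos one_pos (by linarith)
  have h1γ : (0:ℝ) < 1 + γ := by linarith
  -- strict monotonicity in x
  have hmono : ∀ c : ℝ, StrictMonoOn (g c) (Set.Ici 0) := by
    intro c x hx y hy hxy
    simp only [Set.mem_Ici] at hx hy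
    rw [hg, hg, div_lt_div_iff_of_pos_right h1γ]
    have hE : Real.exp ((1+γ)*c^2*x) ≤ Real.exp ((1+γ)*c^2*y) := by
      apply Real.exp_le_exp.2
      have : (0:ℝ) ≤ (1+γ)*c^2 := by positivity
      nlinarith
    have h1 : x * Real.exp ((1+γ)*c^2*x) ≤ x * Real.exp ((1+γ)*c^2*y) :=
      mul_le_mul_of_nonneg_left hE hx
    have h2 : x * Real.exp ((1+γ)*c^2*y) < y * Real.exp ((1+γ)*c^2*y) :=
      mul_lt_mul_of_pos_right hxy (Real.exp_pos _)
    have h3 := mul_lt_mul_of_pos_left (lt_of_le_of_lt h1 h2) hγ0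
    nlinarith [h3, hxy]
  -- value at 0
  have hzero : ∀ c : ℝ, g c 0 = 0 := by intro c; rw [hg]; simp
  -- x ≤ g c x for x ≥ 0
  have hle : ∀ c x : ℝ, 0 ≤ x → x ≤ g c x := by
    intro c x hx
    rw [hg, le_div_iff₀ h1γ]
    have hE : (1:ℝ) ≤ Real.exp ((1+γ)*c^2*x) := Real.one_le_exp (by positivity)
    nlinarith [mul_le_mul_of_nonneg_left hE (mul_nonneg hx hγ0.le)]
  -- tends to atTop
  have htop : ∀ c : ℝ, Tendsto (g c) atTop atTop := by
    intro c
    apply tendsto_atTop_mono' atTop _ tendsto_id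
    filter_upwards [eventually_ge_atTop (0:ℝ)] with x hx
    exact hle c x hx
  -- continuity in x
  have hcontx : ∀ c : ℝ, Continuous (g c) := by
    intro c
    have : g c = fun x => x * (1 + γ * Real.exp ((1 + γ) * c ^ 2 * x)) / (1 + γ) :=
      funext (hg c)
    rw [this]; fun_prop
  -- continuity in c
  have hcontc : ∀ x : ℝ, Continuous (fun c => g c x) := by
    intro x
    have : (fun c => g c x) = fun c => x * (1 + γ * Real.exp ((1 + γ) * c ^ 2 * x)) / (1 + γ) :=
      funext (fun c => hg c x)
    rw [this]; fun_prop
  -- strict monotonicity in c for positive x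
  have hmc : ∀ x : ℝ, 0 < x → ∀ c1 c2 : ℝ, 0 ≤ c1 → c1 < c2 → g c1 x < g c2 x := by
    intro x hx c1 c2 hc1 h12
    rw [hg, hg, div_lt_div_iff_of_pos_right h1γ]
    have hsq : c1^2 < c2^2 := by nlinarith
    have hE : Real.exp ((1+γ)*c1^2*x) < Real.exp ((1+γ)*c2^2*x) := by
      apply Real.exp_lt_exp.2
      nlinarith [mul_lt_mul_of_pos_right (mul_lt_mul_of_pos_left hsq h1γ) hx]
    nlinarith [mul_pos (mul_pos hx hγ0) (sub_pos.2 hE)]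
  -- existence and uniqueness
  have hexu : ∀ c : ℝ, ∃! x : ℝ, 0 < x ∧ g c x = μ := by
    intro c
    obtain ⟨X, hX0, hXμ⟩ : ∃ X : ℝ, 0 ≤ X ∧ μ < g c X := by
      have h1 := (htop c).eventually_gt_atTop μ
      have h2 := eventually_ge_atTop (0:ℝ)
      obtain ⟨X, hX1, hX2⟩ := (h2.and h1).exists
      exact ⟨X, hX1, hX2⟩
    have hμmem : μ ∈ Set.Ioo (g c 0) (g c X) := by
      constructor
      · rw [hzero]; exact hμ
      · exact hXμ
    obtain ⟨x, hxmem, hxeq⟩ := intermediate_value_Ioo hX0 ((hcontx c).continuousOn) hμmem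
    refine ⟨x, ⟨hxmem.1, hxeq⟩, ?_⟩
    rintro y ⟨hy0, hyeq⟩
    exact (hmono c).injOn (Set.mem_Ici.2 hy0.le) (Set.mem_Ici.2 hxmem.1.le)
      (by rw [hyeq, hxeq])
  refine ⟨hmono, hzero, htop, hexu, ?_⟩
  intro φ hφ
  have hanti : StrictAntiOn φ (Set.Ici 0) := by
    intro c1 h1 c2 h2 h12
    simp only [Set.mem_Ici] at h1 h2
    by_contra hcon
    push_neg at hcon
    obtain ⟨hp1, he1⟩ := hφ c1 h1
    obtain ⟨hp2, he2⟩ := hφ c2 h2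
    have : g c1 (φ c1) ≤ g c1 (φ c2) :=
      (hmono c1).monotoneOn (Set.mem_Ici.2 hp1.le) (Set.mem_Ici.2 hp2.le) hcon
    have h2' : g c1 (φ c2) < g c2 (φ c2) := hmc (φ c2) hp2 c1 c2 h1 h12
    rw [he1, he2] at *
    linarith
  refine ⟨?_, hanti, ?_⟩
  · -- continuity
    intro c0 hc0
    simp only [Set.mem_Ici] at hc0
    rw [Metric.continuousWithinAt_iff]
    intro ε hε
    obtain ⟨hp0, he0⟩ := hφ c0 hc0
    set x0 := φ c0 with hx0
    set x1 := max (x0/2) (x0 - ε) with hx1def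
    set x2 := x0 + ε with hx2def
    have hx1pos : 0 < x1 := lt_max_of_lt_left (by linarith)
    have hx1lt : x1 < x0 := max_lt (by linarith) (by linarith)
    have hx2gt : x0 < x2 := by simp [hx2def]; linarith
    have hg1 : g c0 x1 < μ := by
      rw [← he0]
      exact hmono c0 (Set.mem_Ici.2 hx1pos.le) (Set.mem_Ici.2 hp0.le) hx1lt
    have hg2 : μ < g c0 x2 := by
      rw [← he0]
      exact hmono c0 (Set.mem_Ici.2 hp0.le) (Set.mem_Ici.2 (by linarith)) hx2gt
    have hev1 : ∀ᶠ c in nhds c0, g c x1 < μ :=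
      (hcontc x1).continuousAt.eventually_lt continuousAt_const hg1
    have hev2 : ∀ᶠ c in nhds c0, μ < g c x2 :=
      continuousAt_const.eventually_lt (hcontc x2).continuousAt hg2
    obtain ⟨δ, hδ0, hδ⟩ := Metric.eventually_nhds_iff.1 (hev1.and hev2)
    refine ⟨δ, hδ0, ?_⟩
    intro c hc hcd
    simp only [Set.mem_Ici] at hc
    obtain ⟨hgc1, hgc2⟩ := hδ hcd
    obtain ⟨hpc, hec⟩ := hφ c hc
    have hlow : x1 < φ c := by
      by_contra hcon
      push_neg at hcon
      have : g c (φ c) ≤ g c x1 :=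
        (hmono c).monotoneOn (Set.mem_Ici.2 hpc.le) (Set.mem_Ici.2 hx1pos.le) hcon
      rw [hec] at this; linarith
    have hhigh : φ c < x2 := by
      by_contra hcon
      push_neg at hcon
      have : g c x2 ≤ g c (φ c) :=
        (hmono c).monotoneOn (Set.mem_Ici.2 (by linarith : (0:ℝ) ≤ x2))
          (Set.mem_Ici.2 hpc.le) hcon
      rw [hec] at this; linarith
    have hx1ge : x0 - ε ≤ x1 := le_max_right _ _
    rw [Real.dist_eq, abs_sub_lt_iff]
    constructor <;> simp only [hx2def] at hhigh <;> linarith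
  · -- tendsto 0
    rw [tendsto_order]
    constructor
    · intro a ha
      filter_upwards [eventually_ge_atTop (0:ℝ)] with c hc
      have := (hφ c hc).1
      linarith
    · intro a ha
      have hta : Tendsto (fun c : ℝ => g c a) atTop atTop := by
        have t1 : Tendsto (fun c : ℝ => (1+γ)*c^2*a) atTop atTop := by
          have := (tendsto_pow_atTop (n := 2) (by norm_num)).const_mul_atTop
            (show (0:ℝ) < (1+γ)*a by positivity)
          apply this.congr
          intro c; ring
        have t2 : Tendsto (fun c : ℝ => Real.exp ((1+γ)*c^2*a)) atTop atTop :=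
          Real.tendsto_exp_atTop.comp t1
        have t3 : Tendsto (fun c : ℝ => (a*γ/(1+γ)) * Real.exp ((1+γ)*c^2*a) + a/(1+γ))
            atTop atTop := by
          apply tendsto_atTop_add_const_right
          exact t2.const_mul_atTop (by positivity)
        apply t3.congr
        intro c
        rw [hg]
        field_simp
        ring
      filter_upwards [hta.eventually_gt_atTop μ, eventually_ge_atTop (0:ℝ)] with c hgc hc
      obtain ⟨hpc, hec⟩ := hφ c hc
      by_contra hcon
      push_neg at hcon
      have : g c a ≤ g c (φ c) :=
        (hmono c).monotoneOn (Set.mem_Ici.2 ha.le) (Set.mem_Ici.2 hpc.le) hcon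
      rw [hec] at this; linarith
end

section
/- Assume μ_1 ≥ μ_2 ≥ … ≥ μ_{s_c} > 0 and λ² < (L/n_c^{L+1}) ∑_{β=1}^{s_c} μ_β². Then the system of s_c+1 equations (λ/L)(r_β/c)(n_c − 1 + exp((n_c/(n_c−1)) c r_β)) = μ_β for all β ∈ {1,…,s_c}, together with ∑_{β=1}^{s_c}(r_β/c)² = L n_c^{L−1}, has a unique solution (c, r_1, …, r_{s_c}) with all coordinates strictly positive, and this solution satisfies r_1 ≥ r_2 ≥ … ≥ r_{s_c} > 0. -/
/-!
Put `u_β = r_β / c` and `θ = n_c c² / (n_c - 1)`. The `β`-th equation becomes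
`φ_θ(u_β) = m_β := L μ_β / λ` with `φ_θ(u) = u (n_c - 1 + e^{θu})`. Since `(1 + x) eˣ ≥ -1/2` and
`n_c ≥ 2`, we have `φ_θ' ≥ 1/2`, so `u_β = φ_θ⁻¹(m_β)` is determined by `θ`; it is increasing in
`m_β`, strictly decreasing in `θ`, and `1/2`-expansiveness of `φ_θ` makes it continuous in `θ`. The
normalisation becomes `S(θ) = ∑ u_β(θ)² = L n_c^{L-1}` with `S` strictly decreasing and continuous,
`S(0) = ∑ (m_β / n_c)²` (this exceeds the target exactly when the bound on `λ²` holds), and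
`θ S(θ) ≤ ∑ m_β` because `φ_θ(u) ≥ θ u²`. The intermediate value theorem gives exactly one `θ`, hence
exactly one `c`, and then one `r`.
-/

open Real Finset

lemma neg_half_le_one_add_mul_exp (x : ℝ) : -(1 / 2) ≤ (1 + x) * exp x := by
  rcases le_or_gt (-1) x with hx | hx
  · have := exp_pos x
    nlinarith
  · -- `exp (-(1 + x)) ≥ -x` and `exp (-1) ≤ 1 / 2`
    have h1 : -(1 + x) + 1 ≤ exp (-(1 + x)) := add_one_le_exp _
    have h2 : exp (-(1 + x)) * exp x = exp (-1) := by rw [← exp_add]; ring_nf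
    have h3 : exp (-1) * exp 1 = 1 := by rw [← exp_add]; norm_num
    have h4 : 2 ≤ exp 1 := by linarith [add_one_le_exp (1 : ℝ)]
    nlinarith [exp_pos x, exp_pos (-1)]

noncomputable def phi (N θ u : ℝ) : ℝ := u * (N - 1 + exp (θ * u))

noncomputable def phiInv (N θ : ℝ) : ℝ → ℝ := Function.invFun (phi N θ)

section Phi

variable {N θ : ℝ}

lemma hasDerivAt_phi (N θ u : ℝ) :
    HasDerivAt (phi N θ) (N - 1 + (1 + θ * u) * exp (θ * u)) u := by
  have h := (hasDerivAt_id u).mul (((hasDerivAt_id u).const_mul θ).exp.const_add (N - 1))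
  exact h.congr_deriv (by simp only [id_eq]; ring)

@[simp]
lemma phi_zero (N θ : ℝ) : phi N θ 0 = 0 := by simp [phi]

lemma continuous_phi_param (N u : ℝ) : Continuous fun θ => phi N θ u := by
  unfold phi; fun_prop

lemma half_sub_le_phi_sub (hN : 2 ≤ N) (θ : ℝ) {u v : ℝ} (h : v ≤ u) :
    (u - v) / 2 ≤ phi N θ u - phi N θ v := by
  have hmono : Monotone fun x => phi N θ x - x / 2 := by
    refine monotone_of_hasDerivAt_nonneg (f' := fun x => N - 1 + (1 + θ * x) * exp (θ * x) - 1 / 2)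
      (fun x => (hasDerivAt_phi N θ x).sub ((hasDerivAt_id x).div_const 2)) fun x => ?_
    show (0 : ℝ) ≤ _
    linarith [neg_half_le_one_add_mul_exp (θ * x)]
  linarith [hmono h]

lemma phi_strictMono (hN : 2 ≤ N) (θ : ℝ) : StrictMono (phi N θ) := fun _ _ h => by
  linarith [half_sub_le_phi_sub hN θ h.le]

lemma phi_surjective (hN : 2 ≤ N) (θ : ℝ) : Function.Surjective (phi N θ) := by
  intro m
  have hm := abs_nonneg m
  have hlo := half_sub_le_phi_sub hN θ (show -(2 * |m|) ≤ 0 by linarith)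
  have hhi := half_sub_le_phi_sub hN θ (show 0 ≤ 2 * |m| by linarith)
  simp only [phi_zero] at hlo hhi
  have hc : Continuous (phi N θ) := by unfold phi; fun_prop
  obtain ⟨u, -, hu⟩ := intermediate_value_Icc (show -(2 * |m|) ≤ 2 * |m| by linarith)
    hc.continuousOn (show m ∈ Set.Icc _ _ from
      ⟨by linarith [neg_abs_le m], by linarith [le_abs_self m]⟩)
  exact ⟨u, hu⟩

lemma phi_phiInv (hN : 2 ≤ N) (θ m : ℝ) : phi N θ (phiInv N θ m) = m :=
  Function.rightInverse_invFun (phi_surjective hN θ) m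

lemma phiInv_eq_iff (hN : 2 ≤ N) {m u : ℝ} : phiInv N θ m = u ↔ phi N θ u = m := by
  rw [← (phi_strictMono hN θ).injective.eq_iff, phi_phiInv hN, eq_comm]

lemma phiInv_le_iff (hN : 2 ≤ N) {m u : ℝ} : phiInv N θ m ≤ u ↔ m ≤ phi N θ u := by
  rw [← (phi_strictMono hN θ).le_iff_le, phi_phiInv hN]

lemma lt_phiInv_iff (hN : 2 ≤ N) {m u : ℝ} : u < phiInv N θ m ↔ phi N θ u < m := by
  rw [← (phi_strictMono hN θ).lt_iff_lt, phi_phiInv hN]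

lemma phiInv_mono (hN : 2 ≤ N) (θ : ℝ) : Monotone (phiInv N θ) := fun m m' h => by
  rwa [phiInv_le_iff hN, phi_phiInv hN]

lemma phiInv_pos (hN : 2 ≤ N) {m : ℝ} (hm : 0 < m) : 0 < phiInv N θ m := by
  rwa [lt_phiInv_iff hN, phi_zero]

lemma phiInv_zero_param (hN : 2 ≤ N) (m : ℝ) : phiInv N 0 m = m / N := by
  rw [phiInv_eq_iff hN, phi, zero_mul, exp_zero]
  field_simp
  ring

lemma strictAnti_phiInv_param (hN : 2 ≤ N) {m : ℝ} (hm : 0 < m) :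
    StrictAnti fun θ => phiInv N θ m := by
  intro θ θ' h
  set u := phiInv N θ' m
  have hu : 0 < u := phiInv_pos hN hm
  have hexp : exp (θ * u) < exp (θ' * u) := exp_lt_exp.2 (by nlinarith)
  have key : phi N θ u < phi N θ' u := by unfold phi; nlinarith
  rwa [phi_phiInv hN, ← lt_phiInv_iff hN] at key

lemma abs_phiInv_sub_le (hN : 2 ≤ N) (θ m u : ℝ) :
    |phiInv N θ m - u| ≤ 2 * |phi N θ u - m| := by
  rcases le_total u (phiInv N θ m) with h | h
  · have := half_sub_le_phi_sub hN θ h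
    rw [phi_phiInv hN] at this
    rw [abs_of_nonneg (by linarith)]
    linarith [neg_abs_le (phi N θ u - m)]
  · have := half_sub_le_phi_sub hN θ h
    rw [phi_phiInv hN] at this
    rw [abs_of_nonpos (by linarith)]
    linarith [le_abs_self (phi N θ u - m)]

lemma continuous_phiInv_param (hN : 2 ≤ N) (m : ℝ) : Continuous fun θ => phiInv N θ m := by
  refine continuous_iff_continuousAt.2 fun θ₀ => ?_
  set u₀ := phiInv N θ₀ m
  have hbound : Filter.Tendsto (fun θ => 2 * |phi N θ u₀ - m|) (nhds θ₀) (nhds 0) := by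
    have := (((continuous_phi_param N u₀).sub (continuous_const (y := m))).abs.const_mul
      2).tendsto θ₀
    simpa [u₀, phi_phiInv hN] using this
  rw [ContinuousAt, tendsto_iff_dist_tendsto_zero]
  exact squeeze_zero (fun _ => dist_nonneg) (fun θ => abs_phiInv_sub_le hN θ m u₀) hbound

lemma mul_phiInv_sq_le (hN : 2 ≤ N) {m : ℝ} (hm : 0 < m) :
    θ * phiInv N θ m ^ 2 ≤ m := by
  set u := phiInv N θ m
  have hu : 0 < u := phiInv_pos hN hm
  have hexp : θ * u + 1 ≤ exp (θ * u) := add_one_le_exp _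
  have hm' : u * (N - 1 + exp (θ * u)) = m := phi_phiInv hN θ m
  nlinarith

end Phi

noncomputable def sumSqPhiInv {ι : Type*} [Fintype ι] (N : ℝ) (m : ι → ℝ) (θ : ℝ) : ℝ :=
  ∑ β, phiInv N θ (m β) ^ 2

section SumSq

variable {ι : Type*} [Fintype ι] {N : ℝ} {m : ι → ℝ}

lemma sumSqPhiInv_strictAnti [Nonempty ι] (hN : 2 ≤ N) (hm : ∀ β, 0 < m β) :
    StrictAnti (sumSqPhiInv N m) := fun _ _ h =>
  sum_lt_sum_of_nonempty univ_nonempty fun β _ =>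
    pow_lt_pow_left₀ (strictAnti_phiInv_param hN (hm β) h) (phiInv_pos hN (hm β)).le two_ne_zero

lemma continuous_sumSqPhiInv (hN : 2 ≤ N) : Continuous (sumSqPhiInv N m) :=
  continuous_finsetSum _ fun β _ => (continuous_phiInv_param hN (m β)).pow 2

lemma sumSqPhiInv_zero (hN : 2 ≤ N) : sumSqPhiInv N m 0 = ∑ β, (m β / N) ^ 2 := by
  simp only [sumSqPhiInv, phiInv_zero_param hN]

lemma mul_sumSqPhiInv_le (hN : 2 ≤ N) (hm : ∀ β, 0 < m β) (θ : ℝ) :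
    θ * sumSqPhiInv N m θ ≤ ∑ β, m β := by
  rw [sumSqPhiInv, mul_sum]
  exact sum_le_sum fun β _ => mul_phiInv_sq_le hN (hm β)

lemma exists_pos_sumSqPhiInv_eq (hN : 2 ≤ N) (hm : ∀ β, 0 < m β) {T : ℝ} (hT : 0 < T)
    (hT₀ : T < sumSqPhiInv N m 0) : ∃ θ, 0 < θ ∧ sumSqPhiInv N m θ = T := by
  -- `θ₁ * S θ₁ ≤ ∑ m β < θ₁ * T`
  set θ₁ := (∑ β, m β) / T + 1
  have hθ₁ : 0 < θ₁ := by
    have := div_nonneg (sum_nonneg fun β (_ : β ∈ univ) => (hm β).le) hT.le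
    positivity
  have hθ₁T : sumSqPhiInv N m θ₁ < T := by
    have h := mul_sumSqPhiInv_le hN hm θ₁
    have : ∑ β, m β < θ₁ * T := by rw [add_mul, div_mul_cancel₀ _ hT.ne']; linarith
    nlinarith
  obtain ⟨θ, hθ, hSθ⟩ := intermediate_value_Icc' hθ₁.le (continuous_sumSqPhiInv hN).continuousOn
    (show T ∈ Set.Icc _ _ from ⟨hθ₁T.le, hT₀.le⟩)
  refine ⟨θ, hθ.1.lt_of_ne ?_, hSθ⟩
  rintro rfl
  exact hT₀.ne' hSθ

end SumSq

lemma eq_iff_eq_mul_phiInv {N L lam μ c r : ℝ} (hN : 2 ≤ N) (hL : L ≠ 0) (hlam : lam ≠ 0)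
    (hc : c ≠ 0) :
    lam / L * (r / c) * (N - 1 + exp (N / (N - 1) * c * r)) = μ ↔
      r = c * phiInv N (N / (N - 1) * c ^ 2) (L * μ / lam) := by
  have harg : N / (N - 1) * c * r = N / (N - 1) * c ^ 2 * (r / c) := by field_simp
  rw [mul_comm c, ← div_eq_iff hc, eq_comm (a := r / c), phiInv_eq_iff hN, phi, ← harg]
  rw [eq_div_iff hlam, mul_assoc, div_mul_eq_mul_div, div_eq_iff hL]
  constructor <;> intro h <;> linear_combination h

lemma system_iff {ι : Type*} [Fintype ι] {N L lam T c : ℝ} {μ r : ι → ℝ} (hN : 2 ≤ N)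
    (hL : 0 < L) (hlam : 0 < lam) (hμ : ∀ β, 0 < μ β) (hc : 0 < c) :
    ((∀ β, 0 < r β) ∧ (∀ β, lam / L * (r β / c) * (N - 1 + exp (N / (N - 1) * c * r β)) = μ β) ∧
        ∑ β, (r β / c) ^ 2 = T) ↔
      (r = fun β => c * phiInv N (N / (N - 1) * c ^ 2) (L * μ β / lam)) ∧
        sumSqPhiInv N (fun β => L * μ β / lam) (N / (N - 1) * c ^ 2) = T := by
  simp only [eq_iff_eq_mul_phiInv hN hL.ne' hlam.ne' hc.ne', funext_iff]
  constructor
  · rintro ⟨-, hr, hT⟩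
    refine ⟨hr, ?_⟩
    simpa [hr, sumSqPhiInv, hc.ne'] using hT
  · rintro ⟨hr, hT⟩
    refine ⟨fun β => ?_, hr, ?_⟩
    · rw [hr]; exact mul_pos hc (phiInv_pos hN (by have := hμ β; positivity))
    · simpa [hr, sumSqPhiInv, hc.ne'] using hT

lemma mul_pow_pred_lt_sum_sq {ι : Type*} [Fintype ι] {N lam : ℝ} {L : ℕ} {μ : ι → ℝ}
    (hN : 0 < N) (hL : 1 ≤ L) (hlam : 0 < lam)
    (h : lam ^ 2 < ((L : ℝ) / N ^ (L + 1)) * ∑ β, μ β ^ 2) :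
    (L : ℝ) * N ^ (L - 1) < ∑ β, (L * μ β / lam / N) ^ 2 := by
  have hpow : N ^ (L + 1) = N ^ (L - 1) * N ^ 2 := by rw [← pow_add]; congr 1; omega
  have hL₀ : (0 : ℝ) < L := by exact_mod_cast hL
  have hsum : ∑ β, (L * μ β / lam / N) ^ 2 = L ^ 2 / (lam ^ 2 * N ^ 2) * ∑ β, μ β ^ 2 := by
    rw [mul_sum]; exact sum_congr rfl fun β _ => by field_simp
  rw [hsum, div_mul_eq_mul_div, lt_div_iff₀ (by positivity)]
  rw [hpow, div_mul_eq_mul_div, lt_div_iff₀ (by positivity)] at h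
  nlinarith

theorem system_unique_solution (n_c L s_c : ℕ) (hn : 2 ≤ n_c) (hL : 1 ≤ L) (hs : 1 ≤ s_c)
    (μ : Fin s_c → ℝ) (hμpos : ∀ β, 0 < μ β)
    (hμmono : ∀ β β' : Fin s_c, β ≤ β' → μ β' ≤ μ β)
    (lam : ℝ) (hlam : 0 < lam)
    (hbound : lam ^ 2 < ((L : ℝ) / (n_c : ℝ) ^ (L + 1)) * ∑ β, (μ β) ^ 2) :
    (∃! p : ℝ × (Fin s_c → ℝ),
      0 < p.1 ∧ (∀ β, 0 < p.2 β) ∧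
      (∀ β, (lam / L) * (p.2 β / p.1) *
        ((n_c : ℝ) - 1 + Real.exp (((n_c : ℝ) / ((n_c : ℝ) - 1)) * p.1 * p.2 β)) = μ β) ∧
      (∑ β, (p.2 β / p.1) ^ 2 = (L : ℝ) * (n_c : ℝ) ^ (L - 1))) ∧
    (∀ p : ℝ × (Fin s_c → ℝ),
      (0 < p.1 ∧ (∀ β, 0 < p.2 β) ∧
      (∀ β, (lam / L) * (p.2 β / p.1) *
        ((n_c : ℝ) - 1 + Real.exp (((n_c : ℝ) / ((n_c : ℝ) - 1)) * p.1 * p.2 β)) = μ β) ∧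
      (∑ β, (p.2 β / p.1) ^ 2 = (L : ℝ) * (n_c : ℝ) ^ (L - 1))) →
      ∀ β β' : Fin s_c, β ≤ β' → p.2 β' ≤ p.2 β) := by
  have : Nonempty (Fin s_c) := ⟨⟨0, hs⟩⟩
  have hN : (2 : ℝ) ≤ n_c := by exact_mod_cast hn
  have hL₀ : (0 : ℝ) < L := by exact_mod_cast hL
  set m : Fin s_c → ℝ := fun β => L * μ β / lam
  have hm : ∀ β, 0 < m β := fun β => by have := hμpos β; positivity
  have hsys (p : ℝ × (Fin s_c → ℝ)) := and_congr_right fun hc : 0 < p.1 =>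
    system_iff (r := p.2) (T := L * (n_c : ℝ) ^ (L - 1)) hN hL₀ hlam hμpos hc
  obtain ⟨θ, hθ, hSθ⟩ :=
    exists_pos_sumSqPhiInv_eq (T := L * (n_c : ℝ) ^ (L - 1)) hN hm (by positivity)
    (by rw [sumSqPhiInv_zero hN]; exact mul_pow_pred_lt_sum_sq (by positivity) hL hlam hbound)
  set κ : ℝ := n_c / (n_c - 1)
  have hκ : 0 < κ := div_pos (by linarith) (by linarith)
  set c := √(θ / κ)
  have hc : 0 < c := sqrt_pos.2 (div_pos hθ hκ)
  have hcθ : κ * c ^ 2 = θ := by rw [sq_sqrt (div_pos hθ hκ).le]; field_simp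
  refine ⟨⟨(c, fun β => c * phiInv n_c θ (m β)), (hsys _).2 ⟨hc, by rw [hcθ], by rwa [hcθ]⟩,
    fun q hq => ?_⟩, fun q hq β β' hββ' => ?_⟩
  · obtain ⟨hq₁, hq₂, hqT⟩ := (hsys q).1 hq
    have hθq : κ * q.1 ^ 2 = θ := (sumSqPhiInv_strictAnti hN hm).injective (hqT.trans hSθ.symm)
    have hqc : q.1 = c := by
      rw [← hcθ] at hθq
      exact (pow_left_inj₀ hq₁.le hc.le two_ne_zero).1 (mul_left_cancel₀ hκ.ne' hθq)
    rw [Prod.ext_iff, hq₂, ← hθq, ← hqc]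
    exact ⟨rfl, rfl⟩
  · obtain ⟨hq₁, hq₂, -⟩ := (hsys q).1 hq
    rw [hq₂]
    exact mul_le_mul_of_nonneg_left (phiInv_mono hN _ (div_le_div_of_nonneg_right
      (mul_le_mul_of_nonneg_left (hμmono β β' hββ') hL₀.le) hlam.le)) hq₁.le
end

section
/- Let n_c ≥ 2 and suppose for each latent pair define Γ^{(j,k)} = Z_j(Z_j − Z_k)ᵀ ∈ ℝ^{n_c×n_c} where Z_k is the one-hot concept matrix of z_k ∈ {1,…,n_c}^L. If K = n_c^L and {z_1,…,z_K} = {1,…,n_c}^L, then any positive semi-definite matrix A ∈ ℝ^{n_c×n_c} satisfying ⟨A, Γ^{(j,k)} − Γ^{(j',k')}⟩_F = 0 for all quadruples with dist(z_j,z_k) = dist(z_{j'},z_{k'}) must be of the form A = aI_{n_c} + b𝟙_{n_c}𝟙_{n_c}ᵀ for some reals a, b. -/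
open Matrix Finset

lemma frob_Z {n_c L K : ℕ} (A : Matrix (Fin n_c) (Fin n_c) ℝ)
    (z : Fin K → Fin L → Fin n_c) (j k : Fin K) :
    frobInner A (Zmat z j * (Zmat z k)ᵀ) = ∑ ℓ, A (z j ℓ) (z k ℓ) := by
  simp only [frobInner, Zmat, Matrix.mul_apply, Matrix.transpose_apply, Matrix.of_apply,
    Finset.mul_sum]
  rw [Finset.sum_comm]
  refine Eq.trans (Finset.sum_congr rfl fun y _ => Finset.sum_comm) ?_
  rw [Finset.sum_comm]
  refine Finset.sum_congr rfl fun ℓ _ => ?_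
  simp [mul_ite, ite_mul, Finset.sum_ite_eq', Finset.sum_ite_eq]

lemma frob_sub {m n : Type*} [Fintype m] [Fintype n] (A B C : Matrix m n ℝ) :
    frobInner A (B - C) = frobInner A B - frobInner A C := by
  simp [frobInner, Matrix.sub_apply, mul_sub, Finset.sum_sub_distrib]

theorem full_latent_psd_constraint (n_c L K : ℕ) (hn : 2 ≤ n_c) (hL : 1 ≤ L)
    (hK : K = n_c ^ L)
    (z : Fin K → Fin L → Fin n_c) (hz : Function.Bijective z)
    (A : Matrix (Fin n_c) (Fin n_c) ℝ) (hA : A.PosSemidef)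
    (horth : ∀ j k j' k' : Fin K,
      hammingDist (z j) (z k) = hammingDist (z j') (z k') →
      frobInner A
        (Zmat z j * (Zmat z j - Zmat z k)ᵀ -
          Zmat z j' * (Zmat z j' - Zmat z k')ᵀ) = 0) :
    ∃ a b : ℝ, A = a • (1 : Matrix (Fin n_c) (Fin n_c) ℝ) +
      b • Matrix.of (fun _ _ => (1 : ℝ)) := by
  -- notation
  set i0 : Fin L := ⟨0, hL⟩ with hi0
  set e0 : Fin n_c := ⟨0, by omega⟩ with he0
  set e1 : Fin n_c := ⟨1, by omega⟩ with he1
  have h01 : e0 ≠ e1 := by simp [he0, he1, Fin.ext_iff]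
  set u : Fin n_c → (Fin L → Fin n_c) := fun α _ => α with hu
  set v : Fin n_c → Fin n_c → (Fin L → Fin n_c) :=
    fun α β => Function.update (u α) i0 β with hv
  -- symmetry of A
  have hsym : ∀ p q, A p q = A q p := by
    intro p q
    have := congrFun (congrFun hA.1 q) p
    simpa using this
  -- value of the Frobenius inner product
  have hG : ∀ j k : Fin K, frobInner A (Zmat z j * (Zmat z j - Zmat z k)ᵀ)
      = ∑ ℓ, (A (z j ℓ) (z j ℓ) - A (z j ℓ) (z k ℓ)) := by
    intro j k
    rw [Matrix.transpose_sub, Matrix.mul_sub, frob_sub, frob_Z, frob_Z,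
      ← Finset.sum_sub_distrib]
  -- Hamming distance of the special pairs
  have hd : ∀ α β : Fin n_c, α ≠ β → hammingDist (u α) (v α β) = 1 := by
    intro α β hab
    have hfil : (Finset.univ.filter fun ℓ => u α ℓ ≠ v α β ℓ) = {i0} := by
      ext ℓ
      simp only [Finset.mem_filter, Finset.mem_univ, true_and, Finset.mem_singleton]
      constructor
      · intro h
        by_contra hne
        exact h (by simp [hv, Function.update_of_ne hne])
      · intro h
        subst h
        simp [hv, hu, hab]
    simp only [hammingDist]
    rw [hfil]
    simp
  -- value of the sum for the special pairs
  have hs : ∀ α β : Fin n_c,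
      (∑ ℓ, (A (u α ℓ) (u α ℓ) - A (u α ℓ) (v α β ℓ))) = A α α - A α β := by
    intro α β
    rw [Finset.sum_eq_single i0]
    · simp [hu, hv]
    · intro ℓ _ hℓ
      simp [hu, hv, Function.update_of_ne hℓ]
    · intro h
      exact absurd (Finset.mem_univ i0) h
  -- the key relation
  have key : ∀ α β : Fin n_c, α ≠ β → A α α - A α β = A e0 e0 - A e0 e1 := by
    intro α β hab
    obtain ⟨j, hj⟩ := hz.2 (u α)
    obtain ⟨k, hk⟩ := hz.2 (v α β)
    obtain ⟨j', hj'⟩ := hz.2 (u e0)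
    obtain ⟨k', hk'⟩ := hz.2 (v e0 e1)
    have h := horth j k j' k'
      (by rw [hj, hk, hj', hk', hd α β hab, hd e0 e1 h01])
    rw [frob_sub, hG, hG, hj, hk, hj', hk', hs, hs] at h
    linarith
  have diag : ∀ p, A p p = A e0 e0 := by
    intro p
    by_cases hp : p = e0
    · rw [hp]
    · have h1 := key p e0 hp
      have h2 := key e0 p (Ne.symm hp)
      have h3 := hsym p e0
      linarith
  refine ⟨A e0 e0 - A e0 e1, A e0 e1, ?_⟩
  ext p q
  by_cases hpq : p = q
  · subst hpq
    simp [Matrix.add_apply, Matrix.one_apply, diag p]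
  · have h1 := key p q hpq
    have h2 := diag p
    simp [Matrix.add_apply, Matrix.one_apply, hpq]
    linarith
end
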